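/- arXiv:math/0203190 — 2 statements merged into one kernel-verified Lean document; each statement's English description precedes it below -/
import Mathlib

section
/- For a nonempty bounded subset A of a real Hilbert space H, there exists a unique Chebyshev center of A in H, i.e., a unique point c ∈ H such that sup_{x∈A} ‖x − c‖ = r_H(A). -/
/-!
Write `f y = sup_{x ∈ A} ‖x - y‖`. By Apollonius' identity applied to every `x ∈ A`,
`f (midpoint y z) ^ 2 + ‖y - z‖ ^ 2 / 4 ≤ (f y ^ 2 + f z ^ 2) / 2`, so `f ^ 2` is strongly
midpoint convex. Along a minimizing sequence the right-hand side tends to `inf f ^ 2`, which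
forces the sequence to be Cauchy; its limit is a minimizer by continuity and completeness, and
the same inequality applied to two minimizers shows they coincide.
-/

noncomputable def chebRadius {H : Type*} [NormedAddCommGroup H] (A : Set H) : ℝ :=
  ⨅ y : H, ⨆ x : A, ‖(x : H) - y‖

open Filter Topology Bornology

section StronglyMidpointConvex

variable {E : Type*} [NormedAddCommGroup E] [NormedSpace ℝ E] [CompleteSpace E]

theorem existsUnique_forall_le_of_midpoint_add_norm_sub_sq_le {g : E → ℝ} (hg : Continuous g)
    (hbdd : BddBelow (Set.range g))
    (hmid : ∀ y z, g (midpoint ℝ y z) + ‖y - z‖ ^ 2 / 4 ≤ (g y + g z) / 2) :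
    ∃! c, ∀ y, g c ≤ g y := by
  set m := ⨅ y, g y
  have hm_le : ∀ y, m ≤ g y := ciInf_le hbdd
  have norm_sub_sq_le : ∀ y z, ‖y - z‖ ^ 2 / 4 ≤ (g y + g z) / 2 - m := fun y z => by
    linarith [hmid y z, hm_le (midpoint ℝ y z)]
  obtain ⟨v, -, hv, hv_mem⟩ := exists_seq_tendsto_sInf (Set.range_nonempty g) hbdd
  choose u hu using hv_mem
  have hgu : Tendsto (fun n => g (u n)) atTop (𝓝 m) := by
    rwa [show (fun n => g (u n)) = v from funext hu]
  have hu_cauchy : CauchySeq u := by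
    refine Metric.cauchySeq_iff.2 fun ε hε => ?_
    obtain ⟨N, hN⟩ := eventually_atTop.1
      (hgu.eventually (gt_mem_nhds (lt_add_of_pos_right m (by positivity : 0 < ε ^ 2 / 4))))
    refine ⟨N, fun n hn k hk => ?_⟩
    rw [dist_eq_norm]
    exact lt_of_pow_lt_pow_left₀ 2 hε.le
      (by linarith [norm_sub_sq_le (u n) (u k), hN n hn, hN k hk])
  obtain ⟨c, hc⟩ := cauchySeq_tendsto_of_complete hu_cauchy
  have hgc : g c = m := tendsto_nhds_unique ((hg.tendsto c).comp hc) hgu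
  refine ⟨c, fun y => hgc ▸ hm_le y, fun c' hc' => ?_⟩
  have hsq : ‖c' - c‖ ^ 2 ≤ 0 := by linarith [norm_sub_sq_le c' c, hc' c, hm_le c']
  exact sub_eq_zero.1 <| norm_eq_zero.1 <| pow_eq_zero_iff two_ne_zero |>.1 <|
    le_antisymm hsq (sq_nonneg _)

end StronglyMidpointConvex

noncomputable def farthestDist {H : Type*} [NormedAddCommGroup H] (A : Set H) (y : H) : ℝ :=
  ⨆ x : A, ‖(x : H) - y‖

section farthestDist

variable {H : Type*} [NormedAddCommGroup H] {A : Set H}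

theorem farthestDist_nonneg (A : Set H) (y : H) : 0 ≤ farthestDist A y :=
  Real.iSup_nonneg fun _ => norm_nonneg _

theorem farthestDist_eq_chebRadius_iff {c : H} :
    farthestDist A c = chebRadius A ↔ ∀ y, farthestDist A c ≤ farthestDist A y := by
  have hbdd : BddBelow (Set.range (farthestDist A)) :=
    ⟨0, Set.forall_mem_range.2 (farthestDist_nonneg A)⟩
  exact ⟨fun h y => h.trans_le (ciInf_le hbdd y),
    fun h => le_antisymm (le_ciInf h) (ciInf_le hbdd c)⟩

theorem Bornology.IsBounded.norm_sub_le_farthestDist (hA : IsBounded A) {x : H} (hx : x ∈ A)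
    (y : H) : ‖x - y‖ ≤ farthestDist A y := by
  obtain ⟨r, hr⟩ := hA.subset_closedBall y
  refine le_ciSup (f := fun x : A => ‖(x : H) - y‖) ⟨r, ?_⟩ ⟨x, hx⟩
  rintro _ ⟨x', rfl⟩
  exact mem_closedBall_iff_norm.1 (hr x'.2)

theorem farthestDist_le (hA : A.Nonempty) {y : H} {R : ℝ} (h : ∀ x ∈ A, ‖x - y‖ ≤ R) :
    farthestDist A y ≤ R :=
  have := hA.to_subtype
  ciSup_le fun x => h x x.2

theorem lipschitzWith_farthestDist (hA : A.Nonempty) (hb : IsBounded A) :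
    LipschitzWith 1 (farthestDist A) :=
  LipschitzWith.of_le_add fun y z => farthestDist_le hA fun x hx =>
    calc ‖x - y‖ ≤ ‖x - z‖ + ‖z - y‖ := norm_sub_le_norm_sub_add_norm_sub x z y
      _ ≤ farthestDist A z + dist y z := by
        rw [dist_comm, dist_eq_norm]
        exact add_le_add_left (hb.norm_sub_le_farthestDist hx z) _

theorem farthestDist_midpoint_sq_add_le [InnerProductSpace ℝ H] (hA : A.Nonempty)
    (hb : IsBounded A) (y z : H) :
    farthestDist A (midpoint ℝ y z) ^ 2 + ‖y - z‖ ^ 2 / 4 ≤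
      (farthestDist A y ^ 2 + farthestDist A z ^ 2) / 2 := by
  set D := (farthestDist A y ^ 2 + farthestDist A z ^ 2) / 2 - ‖y - z‖ ^ 2 / 4 with hD_def
  have hpt : ∀ x ∈ A, ‖x - midpoint ℝ y z‖ ^ 2 ≤ D := fun x hx => by
    have apollonius := EuclideanGeometry.dist_sq_add_dist_sq_eq_two_mul_dist_midpoint_sq_add_half_dist_sq x y z
    simp only [dist_eq_norm] at apollonius
    have hy := pow_le_pow_left₀ (norm_nonneg _) (hb.norm_sub_le_farthestDist hx y) 2
    have hz := pow_le_pow_left₀ (norm_nonneg _) (hb.norm_sub_le_farthestDist hx z) 2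
    linarith [hD_def]
  have hD : 0 ≤ D := (sq_nonneg _).trans (hpt _ hA.some_mem)
  have hmid := farthestDist_le hA fun x hx => Real.le_sqrt_of_sq_le (hpt x hx)
  linarith [(Real.le_sqrt (farthestDist_nonneg A _) hD).1 hmid, hD_def]

end farthestDist

theorem stmt2 {H : Type*} [NormedAddCommGroup H] [InnerProductSpace ℝ H] [CompleteSpace H] (A : Set H)
    (hA : A.Nonempty) (hb : Bornology.IsBounded A) :
    ∃! c : H, (⨆ x : A, ‖(x : H) - c‖) = chebRadius A := by
  have hmin : ∃! c : H, ∀ y, farthestDist A c ^ 2 ≤ farthestDist A y ^ 2 :=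
    existsUnique_forall_le_of_midpoint_add_norm_sub_sq_le
      ((lipschitzWith_farthestDist hA hb).continuous.pow 2)
      ⟨0, Set.forall_mem_range.2 fun y => sq_nonneg _⟩
      (farthestDist_midpoint_sq_add_le hA hb)
  refine (existsUnique_congr fun c => ?_).2 hmin
  simp only [pow_le_pow_iff_left₀ (farthestDist_nonneg A c) (farthestDist_nonneg A _)
    two_ne_zero]
  exact farthestDist_eq_chebRadius_iff
end

section
/- Let {e_n} be an orthonormal sequence in an infinite-dimensional real Hilbert space H and let A = {(1 − 1/n)·e_n : n ≥ 1}. Then the diameter of A equals √2, the Chebyshev center of A in H is 0, and r_H(A) = 1; hence A is an extremal set whose intersection with the unit sphere is empty. -/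
open scoped RealInnerProductSpace

/-!
Bessel's inequality forces `⟪e n, y⟫ → 0` for every `y`, so for `a n = (1 - 1/n) • e n` we get
`‖a n - y‖² = ‖a n‖² - 2 ⟪a n, y⟫ + ‖y‖² → 1 + ‖y‖²`. Hence no ball of radius `< 1` contains `A`,
while the closed unit ball about `0` does. The points `a n` are pairwise orthogonal with norms
`< 1` tending to `1`, so their mutual distances are at most `√2` and approach `√2`.
-/

open Filter Topology Metric Bornology

section ChebyshevRadius

variable {H : Type*} [NormedAddCommGroup H]

theorem chebRadius_le_iSup (A : Set H) (y : H) : chebRadius A ≤ ⨆ x : A, ‖(x : H) - y‖ :=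
  ciInf_le ⟨0, by rintro _ ⟨z, rfl⟩; exact Real.iSup_nonneg fun _ => norm_nonneg _⟩ y

theorem le_chebRadius {A : Set H} {r : ℝ} (h : ∀ y : H, r ≤ ⨆ x : A, ‖(x : H) - y‖) :
    r ≤ chebRadius A :=
  le_ciInf h

theorem Bornology.IsBounded.norm_sub_le_iSup {A : Set H} (hA : IsBounded A) {x : H} (hx : x ∈ A)
    (y : H) : ‖x - y‖ ≤ ⨆ z : A, ‖(z : H) - y‖ := by
  obtain ⟨R, hR⟩ := hA.subset_closedBall y
  refine le_ciSup (f := fun z : A => ‖(z : H) - y‖) ⟨R, ?_⟩ ⟨x, hx⟩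
  rintro _ ⟨z, rfl⟩
  exact mem_closedBall_iff_norm.1 (hR z.2)

theorem isBounded_image_of_norm_le {x : ℕ → H} {s : Set ℕ} {r : ℝ} (hr : ∀ n ∈ s, ‖x n‖ ≤ r) :
    IsBounded (x '' s) :=
  (isBounded_closedBall (x := 0) (r := r)).subset <| by
    rintro _ ⟨n, hn, rfl⟩
    simpa using hr n hn

end ChebyshevRadius

section InnerProductSpace

variable {H : Type*} [NormedAddCommGroup H] [InnerProductSpace ℝ H]

theorem Orthonormal.tendsto_inner_atTop {e : ℕ → H} (he : Orthonormal ℝ e) (y : H) :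
    Tendsto (fun n => ⟪e n, y⟫) atTop (𝓝 0) := by
  have hsq : Tendsto (fun n => ‖⟪e n, y⟫‖ ^ 2) atTop (𝓝 0) :=
    (he.inner_products_summable y).tendsto_atTop_zero
  rw [tendsto_zero_iff_norm_tendsto_zero]
  simpa [Real.sqrt_sq_eq_abs] using hsq.sqrt

theorem tendsto_norm_sub_sq {x : ℕ → H} {r : ℝ} (hnorm : Tendsto (fun n => ‖x n‖) atTop (𝓝 r))
    {y : H} (hy : Tendsto (fun n => ⟪x n, y⟫) atTop (𝓝 0)) :
    Tendsto (fun n => ‖x n - y‖ ^ 2) atTop (𝓝 (r ^ 2 + ‖y‖ ^ 2)) := by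
  simp_rw [norm_sub_sq_real]
  simpa using ((hnorm.pow 2).sub (hy.const_mul 2)).add_const (‖y‖ ^ 2)

section Sequence

variable {x : ℕ → H} {s : Set ℕ} {r : ℝ}

theorem le_iSup_norm_sub_image (hs : ∀ᶠ n in atTop, n ∈ s) (hr : ∀ n ∈ s, ‖x n‖ ≤ r)
    (hnorm : Tendsto (fun n => ‖x n‖) atTop (𝓝 r))
    (hweak : ∀ y, Tendsto (fun n => ⟪x n, y⟫) atTop (𝓝 0)) (y : H) :
    r ≤ ⨆ z : x '' s, ‖(z : H) - y‖ := by
  set S := ⨆ z : x '' s, ‖(z : H) - y‖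
  have hS : 0 ≤ S := Real.iSup_nonneg fun _ => norm_nonneg _
  have hle : ∀ᶠ n in atTop, ‖x n - y‖ ^ 2 ≤ S ^ 2 := hs.mono fun n hn =>
    pow_le_pow_left₀ (norm_nonneg _)
      ((isBounded_image_of_norm_le hr).norm_sub_le_iSup (Set.mem_image_of_mem x hn) y) 2
  have hlim := le_of_tendsto (tendsto_norm_sub_sq hnorm (hweak y)) hle
  exact le_of_sq_le_sq (by nlinarith [sq_nonneg ‖y‖]) hS

theorem chebRadius_image_eq (hs : ∀ᶠ n in atTop, n ∈ s) (hr : ∀ n ∈ s, ‖x n‖ ≤ r)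
    (hnorm : Tendsto (fun n => ‖x n‖) atTop (𝓝 r))
    (hweak : ∀ y, Tendsto (fun n => ⟪x n, y⟫) atTop (𝓝 0)) :
    (⨆ z : x '' s, ‖(z : H) - 0‖) = r ∧ chebRadius (x '' s) = r := by
  have hlow := le_iSup_norm_sub_image hs hr hnorm hweak
  obtain ⟨n, hn⟩ := hs.exists
  have : Nonempty (x '' s) := ⟨⟨x n, Set.mem_image_of_mem x hn⟩⟩
  have hup : (⨆ z : x '' s, ‖(z : H) - 0‖) ≤ r := ciSup_le <| by
    rintro ⟨_, m, hm, rfl⟩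
    simpa using hr m hm
  constructor <;> linarith [hlow 0, chebRadius_le_iSup (x '' s) 0, le_chebRadius hlow]

theorem diam_image_eq (horth : Pairwise fun m n => ⟪x m, x n⟫ = 0) (hs : ∀ᶠ n in atTop, n ∈ s)
    (hr : ∀ n ∈ s, ‖x n‖ ≤ r) (hnorm : Tendsto (fun n => ‖x n‖) atTop (𝓝 r)) :
    diam (x '' s) = √2 * r := by
  have hdist : ∀ {m n}, m ≠ n → dist (x m) (x n) = √(‖x m‖ ^ 2 + ‖x n‖ ^ 2) := fun hmn => by
    rw [dist_eq_norm, norm_sub_eq_sqrt_iff_real_inner_eq_zero.2 (horth hmn), sq, sq]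
  have hr0 : 0 ≤ r := ge_of_tendsto' hnorm fun _ => norm_nonneg _
  have hsqrt : √2 * r = √(r ^ 2 + r ^ 2) := by
    rw [← two_mul, Real.sqrt_mul zero_le_two, Real.sqrt_sq hr0]
  apply le_antisymm
  · refine diam_le_of_forall_dist_le (by positivity) ?_
    rintro _ ⟨m, hm, rfl⟩ _ ⟨n, hn, rfl⟩
    rcases eq_or_ne m n with rfl | hmn
    · rw [dist_self]; positivity
    rw [hdist hmn, hsqrt]
    gcongr
    · exact hr m hm
    · exact hr n hn
  · have hlim : Tendsto (fun n => dist (x n) (x (n + 1))) atTop (𝓝 (√2 * r)) := by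
      simp_rw [hdist (Nat.ne_of_lt (Nat.lt_succ_self _)), hsqrt]
      exact ((hnorm.pow 2).add ((hnorm.comp (tendsto_add_atTop_nat 1)).pow 2)).sqrt
    refine le_of_tendsto hlim ?_
    filter_upwards [hs, tendsto_add_atTop_nat 1 hs] with n hn hn'
    exact dist_le_diam_of_mem (isBounded_image_of_norm_le hr) (Set.mem_image_of_mem x hn)
      (Set.mem_image_of_mem x hn')

end Sequence

theorem tendsto_one_sub_one_div_natCast :
    Tendsto (fun n : ℕ => 1 - 1 / (n : ℝ)) atTop (𝓝 1) := by
  simpa using tendsto_one_div_atTop_nhds_zero_nat.const_sub (1 : ℝ)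

theorem norm_one_sub_one_div_smul {e : ℕ → H} (he : Orthonormal ℝ e) {n : ℕ} (hn : 1 ≤ n) :
    ‖(1 - 1 / (n : ℝ)) • e n‖ = 1 - 1 / n := by
  have : 1 / (n : ℝ) ≤ 1 := div_le_one_of_le₀ (by exact_mod_cast hn) (Nat.cast_nonneg n)
  rw [norm_smul, he.1 n, mul_one, Real.norm_of_nonneg (by linarith)]

end InnerProductSpace

theorem stmt14_general {H : Type*} [NormedAddCommGroup H] [InnerProductSpace ℝ H] (e : ℕ → H)
    (he : Orthonormal ℝ e)
    (A : Set H) (hA : A = (fun n : ℕ => (1 - 1 / (n : ℝ)) • e n) '' {n : ℕ | 1 ≤ n}) :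
    Metric.diam A = Real.sqrt 2 ∧
      (⨆ x : A, ‖(x : H) - 0‖) = chebRadius A ∧
      chebRadius A = 1 ∧
      A ∩ Metric.sphere (0 : H) 1 = ∅ := by
  subst hA
  set x := fun n : ℕ => (1 - 1 / (n : ℝ)) • e n
  have hs : ∀ᶠ n in atTop, n ∈ {n : ℕ | 1 ≤ n} := eventually_ge_atTop 1
  have hr (n : ℕ) (hn : n ∈ {n : ℕ | 1 ≤ n}) : ‖x n‖ ≤ 1 :=
    (norm_one_sub_one_div_smul he hn).trans_le (sub_le_self _ (by positivity))
  have hnorm : Tendsto (fun n => ‖x n‖) atTop (𝓝 1) :=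
    tendsto_one_sub_one_div_natCast.congr' <|
      hs.mono fun n hn => (norm_one_sub_one_div_smul he hn).symm
  have hweak (y : H) : Tendsto (fun n => ⟪x n, y⟫) atTop (𝓝 0) := by
    simpa [x, real_inner_smul_left] using
      tendsto_one_sub_one_div_natCast.mul (he.tendsto_inner_atTop y)
  have horth : Pairwise fun m n => ⟪x m, x n⟫ = 0 := fun m n hmn => by
    simp [x, real_inner_smul_left, real_inner_smul_right, he.2 hmn]
  obtain ⟨hsup, hcheb⟩ := chebRadius_image_eq hs hr hnorm hweak
  refine ⟨by simpa using diam_image_eq horth hs hr hnorm, hsup.trans hcheb.symm, hcheb, ?_⟩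
  refine Set.eq_empty_of_forall_notMem ?_
  rintro _ ⟨⟨n, hn, rfl⟩, hsphere⟩
  rw [mem_sphere_zero_iff_norm, norm_one_sub_one_div_smul he hn] at hsphere
  linarith [one_div_pos.2 (Nat.cast_pos.2 hn : (0 : ℝ) < n)]

theorem stmt14 {H : Type*} [NormedAddCommGroup H] [InnerProductSpace ℝ H] [CompleteSpace H] (e : ℕ → H)
    (he : Orthonormal ℝ e)
    (A : Set H) (hA : A = (fun n : ℕ => (1 - 1 / (n : ℝ)) • e n) '' {n : ℕ | 1 ≤ n}) :
    Metric.diam A = Real.sqrt 2 ∧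
      (⨆ x : A, ‖(x : H) - 0‖) = chebRadius A ∧
      chebRadius A = 1 ∧
      A ∩ Metric.sphere (0 : H) 1 = ∅ :=
  stmt14_general e he A hA
end
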